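/- arXiv:1203.3831 — 5 statements merged into one kernel-verified Lean document; each statement's English description precedes it below -/
import Mathlib

section
/- Let σ be a 2n×2n real symmetric positive definite matrix and let Ω̃ be any 2n×2n real matrix that is both antisymmetric (Ω̃ᵀ = -Ω̃) and orthogonal (Ω̃ᵀΩ̃ = 𝟙). Then the smallest eigenvalue of the matrix σ^{1/2} Ω̃ᵀ σ Ω̃ σ^{1/2} is bounded from below by λ₁↑·λ₂↑, the product of the two smallest eigenvalues of σ. (In particular, for Ω̃ = TΩT the partially transposed symplectic form, this says the smallest partially transposed symplectic eigenvalue ν̃₋ of σ satisfies ν̃₋² ≥ λ₁↑λ₂↑.) -/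
open Matrix
open scoped ComplexOrder

open Classical in
/-- The eigenvalues of a matrix in increasing order (junk value `0` if not Hermitian). -/
noncomputable def eigUp {d : ℕ} (M : Matrix (Fin d) (Fin d) ℝ) : Fin d → ℝ :=
  if h : M.IsHermitian then h.eigenvalues ∘ Tuple.sort h.eigenvalues else 0

/-- The eigenvalues of a matrix in decreasing order. -/
noncomputable def eigDown {d : ℕ} (M : Matrix (Fin d) (Fin d) ℝ) (j : Fin d) : ℝ :=
  eigUp M j.rev

/-- The standard symplectic form on `2n` canonical variables: block diagonal with
blocks `[[0,1],[-1,0]]`. -/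
def Omega (n : ℕ) : Matrix (Fin (2*n)) (Fin (2*n)) ℝ :=
  Matrix.of fun i j =>
    if (i : ℕ) + 1 = (j : ℕ) ∧ (i : ℕ) % 2 = 0 then 1
    else if (j : ℕ) + 1 = (i : ℕ) ∧ (j : ℕ) % 2 = 0 then -1 else 0

/-- Partial transposition matrix `T = 𝟙₂^{⊕ l} ⊕ σz^{⊕ (n-l)}` for the bipartition of the
first `l` versus the last `n - l` modes. -/
def Tmat (n l : ℕ) : Matrix (Fin (2*n)) (Fin (2*n)) ℝ :=
  Matrix.diagonal fun i => if (i : ℕ) / 2 < l ∨ (i : ℕ) % 2 = 0 then 1 else -1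

/-- The partially transposed symplectic form `Ω̃ = T Ω T`. -/
def OmegaPT (n l : ℕ) : Matrix (Fin (2*n)) (Fin (2*n)) ℝ :=
  Tmat n l * Omega n * Tmat n l

open Classical in
/-- The positive square root of a positive semidefinite matrix (junk value `0` otherwise). -/
noncomputable def msqrt {d : ℕ} (M : Matrix (Fin d) (Fin d) ℝ) : Matrix (Fin d) (Fin d) ℝ :=
  if h : M.PosSemidef then
    h.1.eigenvectorUnitary.1 * diagonal ((↑) ∘ (√·) ∘ h.1.eigenvalues) *
      (star h.1.eigenvectorUnitary : Matrix (Fin d) (Fin d) ℝ)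
  else 0

/-- `σ + iΩ ≥ 0`: the Robertson–Schrödinger condition for a real symmetric matrix `σ`
to be a bona fide covariance matrix. -/
def IsCM (n : ℕ) (σ : Matrix (Fin (2*n)) (Fin (2*n)) ℝ) : Prop :=
  σ.IsSymm ∧
    (σ.map (Complex.ofReal ·) + Complex.I • (Omega n).map (Complex.ofReal ·)).PosSemidef

/-- `ν̃₋²`, the square of the smallest partially transposed symplectic eigenvalue of `σ`, for
the bipartition of the first `l` versus the remaining modes: the smallest eigenvalue of
`σ^{1/2} Ω̃ᵀ σ Ω̃ σ^{1/2}`. -/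
noncomputable def nuSq (n l : ℕ) (σ : Matrix (Fin (2*n)) (Fin (2*n)) ℝ) : ℝ :=
  sInf (spectrum ℝ (msqrt σ * (OmegaPT n l)ᵀ * σ * OmegaPT n l * msqrt σ))

/-- `ν̃₋`, the smallest partially transposed symplectic eigenvalue of `σ`. -/
noncomputable def nuMin (n l : ℕ) (σ : Matrix (Fin (2*n)) (Fin (2*n)) ℝ) : ℝ :=
  Real.sqrt (nuSq n l σ)

/-- The logarithmic negativity `E_N(σ) = max (0, −log₂ ν̃₋)`. -/
noncomputable def logNeg (n l : ℕ) (σ : Matrix (Fin (2*n)) (Fin (2*n)) ℝ) : ℝ :=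
  max 0 (-(Real.logb 2 (nuMin n l σ)))

/-!
Write `S = σ^{1/2}`, `y = S x`, `z = Ω̃ y`, and let `e` be a unit eigenvector of `σ` for `λ₁`.
Then `xᵀ S Ω̃ᵀ σ Ω̃ S x = zᵀ σ z`; since `Ω̃` is antisymmetric and orthogonal, `z ⊥ y` and
`|z| = |y|`, so Bessel's inequality gives `(e·y)² + (e·z)² ≤ |y|²`. Bounding `σ` below by `λ₁`
along `e` and by `λ₂` on `e^⊥`, once at `z` and once at `x` (where `|y|² = xᵀσx` and
`e·y = √λ₁ e·x`), reduces `λ₁λ₂ |x|² ≤ zᵀσz` to `(λ₂ - λ₁)((e·y)² + (e·z)²) ≤ (λ₂ - λ₁)|y|²`.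
-/

section DotProduct
variable {ι : Type*} [Fintype ι]

lemma dotProduct_mulVec_self_of_transpose_eq_neg {Ω : Matrix ι ι ℝ} (hΩ : Ωᵀ = -Ω)
    (x : ι → ℝ) : x ⬝ᵥ (Ω *ᵥ x) = 0 := by
  have h := dotProduct_transpose_mulVec Ω x x
  rw [hΩ, neg_mulVec, dotProduct_neg] at h
  linarith

lemma dotProduct_mulVec_self_of_transpose_mul_self [DecidableEq ι] {Ω : Matrix ι ι ℝ}
    (hΩ : Ωᵀ * Ω = 1) (x : ι → ℝ) : (Ω *ᵥ x) ⬝ᵥ (Ω *ᵥ x) = x ⬝ᵥ x := by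
  rw [← dotProduct_transpose_mulVec, mulVec_mulVec, hΩ, one_mulVec]

lemma sq_dotProduct_add_sq_dotProduct_le {e y z : ι → ℝ} (he : e ⬝ᵥ e = 1)
    (hyz : y ⬝ᵥ z = 0) (hzz : z ⬝ᵥ z = y ⬝ᵥ y) :
    (e ⬝ᵥ y) ^ 2 + (e ⬝ᵥ z) ^ 2 ≤ y ⬝ᵥ y := by
  set s := (e ⬝ᵥ y) ^ 2 + (e ⬝ᵥ z) ^ 2
  set v := (e ⬝ᵥ y) • y + (e ⬝ᵥ z) • z
  have hev : e ⬝ᵥ v = s := by simp [v, s, dotProduct_add, sq]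
  have hvv : v ⬝ᵥ v = s * (y ⬝ᵥ y) := by
    simp only [v, s, dotProduct_add, add_dotProduct, dotProduct_smul, smul_dotProduct,
      smul_eq_mul, dotProduct_comm z y, hyz, hzz]
    ring
  have hcs : (e ⬝ᵥ v) ^ 2 ≤ (e ⬝ᵥ e) * (v ⬝ᵥ v) := by
    simpa only [dotProduct, sq] using Finset.sum_mul_sq_le_sq_mul_sq Finset.univ e v
  rw [hev, he, hvv, one_mul] at hcs
  have hs : 0 ≤ s := by positivity
  have hy : 0 ≤ y ⬝ᵥ y := by simpa using dotProduct_self_star_nonneg y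
  nlinarith

lemma OrthonormalBasis.dotProduct_self_eq_sum_sq
    (b : OrthonormalBasis ι ℝ (EuclideanSpace ℝ ι)) (w : ι → ℝ) :
    w ⬝ᵥ w = ∑ i, (⇑(b i) ⬝ᵥ w) ^ 2 := by
  have := b.sum_inner_mul_inner (WithLp.toLp 2 w) (WithLp.toLp 2 w)
  simp only [EuclideanSpace.inner_eq_star_dotProduct, star_trivial, dotProduct_comm w] at this
  simp only [sq, this]

end DotProduct

namespace Matrix.IsHermitian
variable {ι : Type*} [Fintype ι] [DecidableEq ι]

lemma cfc_mulVec_eigenvectorBasis {𝕜 : Type*} [RCLike 𝕜] {A : Matrix ι ι 𝕜}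
    (hA : A.IsHermitian) (f : ℝ → ℝ) (j : ι) :
    cfc f A *ᵥ ⇑(hA.eigenvectorBasis j) =
      f (hA.eigenvalues j) • ⇑(hA.eigenvectorBasis j) := by
  rw [hA.cfc_eq, IsHermitian.cfc, Unitary.conjStarAlgAut_apply, ← mulVec_mulVec,
    ← mulVec_mulVec, star_eigenvectorUnitary_mulVec, diagonal_mulVec_single,
    ← eigenvectorUnitary_mulVec, mul_one, ← mulVec_smul, ← Pi.single_smul',
    RCLike.real_smul_eq_coe_smul (K := 𝕜), smul_eq_mul, mul_one]
  rfl

variable {A : Matrix ι ι ℝ}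

lemma dotProduct_eigenvectorBasis_self (hA : A.IsHermitian) (i : ι) :
    ⇑(hA.eigenvectorBasis i) ⬝ᵥ ⇑(hA.eigenvectorBasis i) = 1 := by
  have h := EuclideanSpace.inner_eq_star_dotProduct (hA.eigenvectorBasis i)
    (hA.eigenvectorBasis i)
  rwa [star_trivial, real_inner_self_eq_norm_sq, hA.eigenvectorBasis.orthonormal.1 i, one_pow,
    eq_comm] at h

lemma dotProduct_mulVec_eq_sum (hA : A.IsHermitian) (w : ι → ℝ) :
    w ⬝ᵥ (A *ᵥ w) = ∑ i, hA.eigenvalues i * (⇑(hA.eigenvectorBasis i) ⬝ᵥ w) ^ 2 := by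
  have := hA.eigenvectorBasis.sum_inner_mul_inner (WithLp.toLp 2 w) (WithLp.toLp 2 (A *ᵥ w))
  simp only [EuclideanSpace.inner_eq_star_dotProduct, star_trivial] at this
  rw [dotProduct_comm, ← this]
  refine Finset.sum_congr rfl fun i _ => ?_
  rw [dotProduct_comm (A *ᵥ w), dotProduct_mulVec, ← mulVec_transpose,
    (isHermitian_iff_isSymm.mp hA).eq, mulVec_eigenvectorBasis, smul_dotProduct, smul_eq_mul]
  ring

lemma eigenvalue_mul_add_le_dotProduct_mulVec (hA : A.IsHermitian) {i₀ : ι} {μ : ℝ}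
    (hμ : ∀ i ≠ i₀, μ ≤ hA.eigenvalues i) (w : ι → ℝ) :
    hA.eigenvalues i₀ * (⇑(hA.eigenvectorBasis i₀) ⬝ᵥ w) ^ 2 +
      μ * (w ⬝ᵥ w - (⇑(hA.eigenvectorBasis i₀) ⬝ᵥ w) ^ 2) ≤ w ⬝ᵥ (A *ᵥ w) := by
  rw [hA.dotProduct_mulVec_eq_sum, hA.eigenvectorBasis.dotProduct_self_eq_sum_sq,
    ← Finset.add_sum_erase _ _ (Finset.mem_univ i₀),
    ← Finset.add_sum_erase _ _ (Finset.mem_univ i₀), add_sub_cancel_left, Finset.mul_sum]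
  gcongr with i hi
  exact hμ i (Finset.ne_of_mem_erase hi)

lemma le_sInf_spectrum [Nonempty ι] (hA : A.IsHermitian) {c : ℝ}
    (hc : ∀ x, c * (x ⬝ᵥ x) ≤ x ⬝ᵥ (A *ᵥ x)) : c ≤ sInf (spectrum ℝ A) := by
  rw [hA.spectrum_real_eq_range_eigenvalues]
  refine le_csInf (Set.range_nonempty _) ?_
  rintro _ ⟨i, rfl⟩
  simpa [mulVec_eigenvectorBasis, hA.dotProduct_eigenvectorBasis_self]
    using hc (hA.eigenvectorBasis i)

end Matrix.IsHermitian

section Sqrt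
variable {ι : Type*} [Fintype ι] [DecidableEq ι]

lemma Matrix.transpose_cfc (f : ℝ → ℝ) (A : Matrix ι ι ℝ) : (cfc f A)ᵀ = cfc f A :=
  (isHermitian_iff_isSymm.mp (cfc_predicate f A).isHermitian).eq

lemma Matrix.PosSemidef.cfc_sqrt_mul_self {σ : Matrix ι ι ℝ} (hσ : σ.PosSemidef) :
    cfc Real.sqrt σ * cfc Real.sqrt σ = σ := by
  rw [← cfc_mul ..]
  refine (cfc_congr fun x hx => Real.mul_self_sqrt ?_).trans (cfc_id' ℝ σ hσ.isHermitian)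
  obtain ⟨i, rfl⟩ := hσ.isHermitian.spectrum_real_eq_range_eigenvalues ▸ hx
  exact hσ.eigenvalues_nonneg i

theorem Matrix.PosSemidef.eigenvalue_mul_mul_dotProduct_le {σ Ω : Matrix ι ι ℝ}
    (hσ : σ.PosSemidef) (hΩ_anti : Ωᵀ = -Ω) (hΩ_orth : Ωᵀ * Ω = 1)
    {i₀ : ι} {μ : ℝ} (hi₀μ : hσ.isHermitian.eigenvalues i₀ ≤ μ)
    (hμ : ∀ i ≠ i₀, μ ≤ hσ.isHermitian.eigenvalues i) (x : ι → ℝ) :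
    hσ.isHermitian.eigenvalues i₀ * μ * (x ⬝ᵥ x) ≤
      x ⬝ᵥ ((cfc Real.sqrt σ * Ωᵀ * σ * Ω * cfc Real.sqrt σ) *ᵥ x) := by
  set S := cfc Real.sqrt σ
  have hS : Sᵀ = S := Matrix.transpose_cfc _ _
  set e := ⇑(hσ.isHermitian.eigenvectorBasis i₀)
  set l := hσ.isHermitian.eigenvalues i₀
  have hl : 0 ≤ l := hσ.eigenvalues_nonneg i₀
  have hform :
      x ⬝ᵥ ((S * Ωᵀ * σ * Ω * S) *ᵥ x) = (Ω *ᵥ S *ᵥ x) ⬝ᵥ (σ *ᵥ Ω *ᵥ S *ᵥ x) := by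
    simp only [← mulVec_mulVec]
    rw [dotProduct_mulVec, ← mulVec_transpose, hS, dotProduct_mulVec (S *ᵥ x),
      vecMul_transpose]
  have hSx : (S *ᵥ x) ⬝ᵥ (S *ᵥ x) = x ⬝ᵥ (σ *ᵥ x) := by
    rw [← dotProduct_transpose_mulVec, hS, mulVec_mulVec, hσ.cfc_sqrt_mul_self]
  have he_Sx : e ⬝ᵥ (S *ᵥ x) = √l * (e ⬝ᵥ x) := by
    rw [← dotProduct_transpose_mulVec, hS, hσ.isHermitian.cfc_mulVec_eigenvectorBasis,
      dotProduct_smul, smul_eq_mul, dotProduct_comm]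
  have hbessel := sq_dotProduct_add_sq_dotProduct_le
    (hσ.isHermitian.dotProduct_eigenvectorBasis_self i₀)
    (dotProduct_mulVec_self_of_transpose_eq_neg hΩ_anti (S *ᵥ x))
    (dotProduct_mulVec_self_of_transpose_mul_self hΩ_orth (S *ᵥ x))
  have hz := hσ.isHermitian.eigenvalue_mul_add_le_dotProduct_mulVec hμ (Ω *ᵥ S *ᵥ x)
  have hx := hσ.isHermitian.eigenvalue_mul_add_le_dotProduct_mulVec hμ x
  rw [dotProduct_mulVec_self_of_transpose_mul_self hΩ_orth, hSx] at hz
  rw [he_Sx, mul_pow, Real.sq_sqrt hl, hSx] at hbessel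
  rw [hform]
  nlinarith [mul_le_mul_of_nonneg_left hx hl]

end Sqrt

lemma Tuple.apply_sort_one_le_of_ne {d : ℕ} {α : Type*} [LinearOrder α] (f : Fin d → α)
    (h1 : 1 < d) {i : Fin d} (hi : i ≠ Tuple.sort f ⟨0, by omega⟩) :
    f (Tuple.sort f ⟨1, h1⟩) ≤ f i := by
  obtain ⟨j, rfl⟩ := (Tuple.sort f).surjective i
  exact Tuple.monotone_sort f
    (Fin.le_def.2 (Nat.one_le_iff_ne_zero.2 fun h => hi (congrArg _ (Fin.ext h))))

lemma eigUp_eq {d : ℕ} {M : Matrix (Fin d) (Fin d) ℝ} (hM : M.IsHermitian) :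
    eigUp M = hM.eigenvalues ∘ Tuple.sort hM.eigenvalues := by
  rw [eigUp, dif_pos hM]

lemma msqrt_eq_cfc {d : ℕ} {M : Matrix (Fin d) (Fin d) ℝ} (hM : M.PosSemidef) :
    msqrt M = cfc Real.sqrt M := by
  rw [msqrt, dif_pos hM, hM.isHermitian.cfc_eq, IsHermitian.cfc, Unitary.conjStarAlgAut_apply]
  rfl

/-- **Lemma 1 (Bound on smallest symplectic eigenvalue).**
For a real symmetric positive definite `σ` and any real antisymmetric orthogonal `Ω̃`,
the smallest eigenvalue of `σ^{1/2} Ω̃ᵀ σ Ω̃ σ^{1/2}` is at least the product of the two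
smallest eigenvalues of `σ`. -/
theorem smallest_pt_symplectic_eigenvalue_bound
    (n : ℕ) (hn : 0 < n) (σ Omt : Matrix (Fin (2*n)) (Fin (2*n)) ℝ)
    (hσpd : σ.PosDef)
    (hanti : Omtᵀ = -Omt) (horth : Omtᵀ * Omt = 1) :
    eigUp σ ⟨0, by omega⟩ * eigUp σ ⟨1, by omega⟩ ≤
      sInf (spectrum ℝ (msqrt σ * Omtᵀ * σ * Omt * msqrt σ)) := by
  have hσ := hσpd.posSemidef
  have : Nonempty (Fin (2 * n)) := ⟨⟨0, by omega⟩⟩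
  have hA : (cfc Real.sqrt σ * Omtᵀ * σ * Omt * cfc Real.sqrt σ).IsHermitian := by
    simpa only [conjTranspose_eq_transpose_of_trivial, transpose_mul, Matrix.transpose_cfc,
        Matrix.mul_assoc]
      using isHermitian_conjTranspose_mul_mul (Omt * cfc Real.sqrt σ) hσ.isHermitian
  rw [eigUp_eq hσ.isHermitian, msqrt_eq_cfc hσ, Function.comp_apply, Function.comp_apply]
  exact hA.le_sInf_spectrum <| hσ.eigenvalue_mul_mul_dotProduct_le hanti horth
    (Tuple.monotone_sort hσ.isHermitian.eigenvalues (Fin.mk_le_mk.2 (Nat.zero_le 1)))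
    fun i hi => Tuple.apply_sort_one_le_of_ne _ _ hi
end

section
/- Let σ be a 2n×2n real symmetric matrix satisfying σ + iΩ ≥ 0, and let {λ_j↑} and {λ_j↓} be its eigenvalues listed respectively in increasing and decreasing order. Then λ_j↑ · λ_j↓ ≥ 1 for every j with 1 ≤ j ≤ n. -/
open Matrix
open scoped ComplexOrder

/-! For a covariance matrix `σ` and any real `x`, evaluating `σ + iΩ ≥ 0` at `a x - i b Ωx` gives
`2ab⟪x, x⟫ ≤ a²⟪x, σx⟫ + b²⟪Ωx, σΩx⟫`, because `Ω` is orthogonal with `Ω² = -1`. Since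
`j + (2n - j + 1) > 2n`, some `x ≠ 0` lies in the span of the `j` lowest eigenvectors of `σ` while
`Ωx` lies in the span of the `2n - j + 1` lowest ones, so that `⟪x, σx⟫ ≤ λ_j↑ ⟪x, x⟫` and
`⟪Ωx, σΩx⟫ ≤ λ_j↓ ⟪x, x⟫`. The binary quadratic form `a²λ_j↑ - 2ab + b²λ_j↓` is then nonnegative,
which forces `λ_j↑ λ_j↓ ≥ 1`. -/

open Module Submodule
open scoped InnerProductSpace

theorem LinearMap.exists_ne_zero_mem_map_mem_of_finrank_lt_add {K V : Type*} [DivisionRing K]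
    [AddCommGroup V] [Module K V] [FiniteDimensional K V] {f : V →ₗ[K] V}
    (hf : Function.Injective f) {s t : Submodule K V}
    (h : finrank K V < finrank K s + finrank K t) : ∃ x ∈ s, f x ∈ t ∧ x ≠ 0 := by
  by_contra! hst
  have hdisj : Disjoint (s.map f) t := disjoint_def.2 fun _ ⟨x, hx, hfx⟩ ht => by
    rw [← hfx, hst x hx (hfx ▸ ht), map_zero]
  have := finrank_add_finrank_le_of_disjoint hdisj
  rw [← (equivMapOfInjective f hf s).finrank_eq] at this
  omega

theorem one_le_mul_of_forall_two_mul_mul_le {L U : ℝ}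
    (h : ∀ a b : ℝ, 2 * a * b ≤ a ^ 2 * L + b ^ 2 * U) : 1 ≤ L * U := by
  have h11 := h 1 1
  rcases lt_or_ge 0 U with hU | hU
  · nlinarith [h U 1]
  · nlinarith [h 1 L]

namespace OrthonormalBasis

variable {ι E : Type*} [Fintype ι]

section RCLike

variable {𝕜 : Type*} [RCLike 𝕜] [NormedAddCommGroup E] [InnerProductSpace 𝕜 E]
  (b : OrthonormalBasis ι 𝕜 E)

theorem finrank_span_image (s : Finset ι) : finrank 𝕜 (span 𝕜 (b '' s)) = s.card := by
  rw [Set.image_eq_range, finrank_span_eq_card]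
  · simp
  · exact b.orthonormal.linearIndependent.comp _ Subtype.val_injective

theorem inner_eq_zero_of_mem_span_image {s : Set ι} {i : ι} (hi : i ∉ s) {x : E}
    (hx : x ∈ span 𝕜 (b '' s)) : ⟪b i, x⟫_𝕜 = 0 := by
  refine (mem_orthogonal_singleton_iff_inner_right (𝕜 := 𝕜)).1 (span_le.2 ?_ hx)
  rintro _ ⟨k, hk, rfl⟩
  exact (mem_orthogonal_singleton_iff_inner_right (𝕜 := 𝕜)).2
    (b.orthonormal.2 fun hik => hi (hik ▸ hk))

end RCLike

theorem inner_map_self_le_of_mem_span [NormedAddCommGroup E] [InnerProductSpace ℝ E]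
    (b : OrthonormalBasis ι ℝ E) {T : E →ₗ[ℝ] E} (hT : T.IsSymmetric) {μ : ι → ℝ}
    (hb : ∀ i, T (b i) = μ i • b i) {s : Set ι} {m : ℝ} (hm : ∀ i ∈ s, μ i ≤ m) {x : E}
    (hx : x ∈ span ℝ (b '' s)) : ⟪x, T x⟫_ℝ ≤ m * ⟪x, x⟫_ℝ := by
  have hcoord (i : ι) : ⟪x, b i⟫_ℝ * ⟪b i, T x⟫_ℝ = μ i * ⟪b i, x⟫_ℝ ^ 2 := by
    rw [← hT, hb, real_inner_smul_left, real_inner_comm x]; ring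
  rw [← b.sum_inner_mul_inner x (T x), ← b.sum_inner_mul_inner x x, Finset.mul_sum]
  refine Finset.sum_le_sum fun i _ => ?_
  rw [hcoord, real_inner_comm (b i) x, ← sq]
  by_cases hi : i ∈ s
  · exact mul_le_mul_of_nonneg_right (hm i hi) (sq_nonneg _)
  · rw [b.inner_eq_zero_of_mem_span_image hi hx]; simp

end OrthonormalBasis

namespace Matrix

theorem real_inner_toEuclideanLin {n : Type*} [Fintype n] [DecidableEq n]
    (A : Matrix n n ℝ) (x y : EuclideanSpace ℝ n) :
    ⟪x, toEuclideanLin A y⟫_ℝ = WithLp.ofLp x ⬝ᵥ A *ᵥ WithLp.ofLp y := by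
  rw [EuclideanSpace.inner_eq_star_dotProduct, star_trivial, dotProduct_comm]
  rfl

/-- The real part of `⟪u - i v, (S + i K) (u - i v)⟫`. -/
theorem PosSemidef.real_inner_quadratic_nonneg {n : Type*} [Fintype n] [DecidableEq n]
    {S K : Matrix n n ℝ}
    (h : (S.map (Complex.ofReal ·) + Complex.I • K.map (Complex.ofReal ·)).PosSemidef)
    (u v : EuclideanSpace ℝ n) :
    0 ≤ ⟪u, toEuclideanLin S u⟫_ℝ + ⟪v, toEuclideanLin S v⟫_ℝ +
      (⟪u, toEuclideanLin K v⟫_ℝ - ⟪v, toEuclideanLin K u⟫_ℝ) := by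
  have h0 := h.dotProduct_mulVec_nonneg fun i => (u i : ℂ) - Complex.I * v i
  convert (Complex.nonneg_iff.1 h0).1 using 1
  simp only [real_inner_toEuclideanLin, dotProduct, mulVec, Finset.mul_sum,
    ← Finset.sum_add_distrib, ← Finset.sum_sub_distrib, Pi.star_apply, star_sub, RCLike.star_def,
    Complex.conj_ofReal, star_mul', Complex.conj_I, neg_mul, sub_neg_eq_add, add_apply, map_apply,
    smul_apply, smul_eq_mul, Complex.re_sum, Complex.mul_re, Complex.add_re, Complex.ofReal_re,
    Complex.I_re, zero_mul, Complex.I_im, Complex.ofReal_im, mul_zero, sub_self, add_zero,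
    Complex.sub_re, sub_zero, Complex.add_im, Complex.mul_im, one_mul, zero_add, Complex.sub_im,
    zero_sub, mul_neg]
  refine Finset.sum_congr rfl fun i _ => Finset.sum_congr rfl fun j _ => ?_
  ring

variable {d : ℕ} {A : Matrix (Fin d) (Fin d) ℝ}

theorem IsHermitian.eigUp_eq (hA : A.IsHermitian) :
    eigUp A = hA.eigenvalues ∘ Tuple.sort hA.eigenvalues :=
  dif_pos hA

theorem IsHermitian.monotone_eigUp (hA : A.IsHermitian) : Monotone (eigUp A) :=
  hA.eigUp_eq ▸ Tuple.monotone_sort _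

theorem IsHermitian.exists_orthonormalBasis_eigUp (hA : A.IsHermitian) :
    ∃ b : OrthonormalBasis (Fin d) ℝ (EuclideanSpace ℝ (Fin d)),
      ∀ i, toEuclideanLin A (b i) = eigUp A i • b i := by
  refine ⟨hA.eigenvectorBasis.reindex (Tuple.sort hA.eigenvalues).symm, fun i => ?_⟩
  rw [OrthonormalBasis.reindex_apply, Equiv.symm_symm, hA.eigUp_eq]
  exact congrArg (WithLp.toLp 2) (hA.mulVec_eigenvectorBasis _)

end Matrix

section SymplecticForm

variable {n : ℕ}

/-- Coordinates are ordered `x₁, p₁, x₂, p₂, …`; this pairs `x_k` with `p_k`. -/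
def conjugateIndex (i : Fin (2 * n)) : Fin (2 * n) :=
  ⟨if (i : ℕ) % 2 = 0 then i + 1 else i - 1, by split_ifs <;> omega⟩

theorem conjugateIndex_conjugateIndex (i : Fin (2 * n)) :
    conjugateIndex (conjugateIndex i) = i := by
  ext; simp only [conjugateIndex]; split_ifs <;> omega

theorem Omega_apply (i j : Fin (2 * n)) :
    Omega n i j = if j = conjugateIndex i then (if (i : ℕ) % 2 = 0 then 1 else -1) else 0 := by
  simp only [Omega, of_apply, conjugateIndex, Fin.ext_iff]
  split_ifs <;> first | rfl | omega

theorem Omega_transpose : (Omega n)ᵀ = -Omega n := by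
  ext i j
  simp only [transpose_apply, Matrix.neg_apply, Omega_apply, conjugateIndex, Fin.ext_iff]
  split_ifs <;> first | omega | norm_num

theorem Omega_mul_self : Omega n * Omega n = -1 := by
  ext i k
  simp only [mul_apply, Omega_apply, ite_mul, zero_mul, Finset.sum_ite_eq', Finset.mem_univ,
    if_true, conjugateIndex_conjugateIndex, Matrix.neg_apply, Matrix.one_apply]
  simp only [conjugateIndex, Fin.ext_iff]
  split_ifs <;> first | omega | norm_num

theorem toEuclideanLin_Omega_Omega (x : EuclideanSpace ℝ (Fin (2 * n))) :
    toEuclideanLin (Omega n) (toEuclideanLin (Omega n) x) = -x := by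
  rw [← LinearMap.comp_apply, ← toLpLin_mul_same, Omega_mul_self, map_neg, toLpLin_one]
  rfl

theorem injective_toEuclideanLin_Omega : Function.Injective (toEuclideanLin (Omega n)) :=
  fun x y hxy => neg_injective <| by
    rw [← toEuclideanLin_Omega_Omega x, ← toEuclideanLin_Omega_Omega y, hxy]

theorem inner_toEuclideanLin_Omega_Omega (x y : EuclideanSpace ℝ (Fin (2 * n))) :
    ⟪toEuclideanLin (Omega n) x, toEuclideanLin (Omega n) y⟫_ℝ = ⟪x, y⟫_ℝ := by
  rw [real_inner_toEuclideanLin, ofLp_toLpLin, toLin'_apply, dotProduct_mulVec,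
    ← mulVec_transpose, Omega_transpose, mulVec_mulVec, neg_mul, Omega_mul_self, neg_neg,
    one_mulVec, EuclideanSpace.inner_eq_star_dotProduct, star_trivial, dotProduct_comm]

theorem IsCM.two_mul_mul_inner_le {σ : Matrix (Fin (2 * n)) (Fin (2 * n)) ℝ} (hσ : IsCM n σ)
    (a b : ℝ) (x : EuclideanSpace ℝ (Fin (2 * n))) :
    2 * a * b * ⟪x, x⟫_ℝ ≤ a ^ 2 * ⟪x, toEuclideanLin σ x⟫_ℝ +
      b ^ 2 * ⟪toEuclideanLin (Omega n) x, toEuclideanLin σ (toEuclideanLin (Omega n) x)⟫_ℝ := by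
  have h := hσ.2.real_inner_quadratic_nonneg (a • x) (b • toEuclideanLin (Omega n) x)
  simp only [map_smul, toEuclideanLin_Omega_Omega, real_inner_smul_left, real_inner_smul_right,
    inner_neg_right, inner_toEuclideanLin_Omega_Omega] at h
  linear_combination h

end SymplecticForm

/-- **Lemma 2 (Uncertainty relation for CMs' eigenvalues).**
If `σ` is a covariance matrix (`σ + iΩ ≥ 0`), then `λ_j↑ · λ_j↓ ≥ 1` for `1 ≤ j ≤ n`. -/
theorem cm_eigenvalue_uncertainty (n : ℕ) (σ : Matrix (Fin (2*n)) (Fin (2*n)) ℝ)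
    (hCM : IsCM n σ) (j : ℕ) (hj1 : 1 ≤ j) (hj2 : j ≤ n) :
    1 ≤ eigUp σ ⟨j - 1, by omega⟩ * eigDown σ ⟨j - 1, by omega⟩ := by
  have hA : σ.IsHermitian := isHermitian_iff_isSymm.2 hCM.1
  have hσ : (toEuclideanLin σ).IsSymmetric := isSymmetric_toEuclideanLin_iff.2 hA
  obtain ⟨e, he⟩ := hA.exists_orthonormalBasis_eigUp
  obtain ⟨x, hxL, hxU, hx0⟩ := LinearMap.exists_ne_zero_mem_map_mem_of_finrank_lt_add
    injective_toEuclideanLin_Omega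
    (s := span ℝ (e '' Finset.Iic (⟨j - 1, by omega⟩ : Fin (2 * n))))
    (t := span ℝ (e '' Finset.Iic (⟨2 * n - j, by omega⟩ : Fin (2 * n)))) (by
      rw [e.finrank_span_image, e.finrank_span_image, finrank_euclideanSpace_fin, Fin.card_Iic,
        Fin.card_Iic, Fin.val_mk, Fin.val_mk]
      omega)
  have hL := e.inner_map_self_le_of_mem_span hσ he
    (fun i hi => hA.monotone_eigUp (Finset.mem_Iic.1 hi)) hxL
  have hU := e.inner_map_self_le_of_mem_span hσ he
    (fun i hi => hA.monotone_eigUp (Finset.mem_Iic.1 hi)) hxU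
  rw [inner_toEuclideanLin_Omega_Omega] at hU
  have hrev : eigDown σ ⟨j - 1, by omega⟩ = eigUp σ ⟨2 * n - j, by omega⟩ := by
    rw [eigDown]; congr 1; ext; simp only [Fin.val_rev]; omega
  rw [hrev]
  refine one_le_mul_of_forall_two_mul_mul_le fun a b =>
    le_of_mul_le_mul_right ?_ (real_inner_self_pos.2 hx0)
  nlinarith [hCM.two_mul_mul_inner_le a b x, mul_le_mul_of_nonneg_left hL (sq_nonneg a),
    mul_le_mul_of_nonneg_left hU (sq_nonneg b)]
end

section
/- (Necessary condition for saturating the squeezing bound.) Let A and D be real 2n×2n matrices such that Ã := −(A + Aᵀ) is positive definite and D is symmetric positive semidefinite with largest eigenvalue δ₁↓ > 0; let α₁↑ be the smallest eigenvalue of Ã. Suppose σ is a real symmetric positive definite 2n×2n matrix satisfying Aσ + σAᵀ + D ≥ 0 whose largest eigenvalue equals δ₁↓/α₁↑, and let v be a unit eigenvector of σ for this largest eigenvalue. Then v is simultaneously an eigenvector of Ã with eigenvalue α₁↑ and an eigenvector of D with eigenvalue δ₁↓. -/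
open Matrix
open scoped ComplexOrder

/-!
Testing the Lyapunov inequality `Aσ + σAᵀ + D ≥ 0` against `v`, with `σ v = s v` and
`s = δ₁↓/α₁↑`, gives `s ⟪v, Ã v⟫ ≤ ⟪v, D v⟫`. The Rayleigh bounds `α₁↑ ≤ ⟪v, Ã v⟫` and
`⟪v, D v⟫ ≤ δ₁↓ = s α₁↑` close this into a chain of equalities. A unit vector attaining
`α₁↑` (resp. `δ₁↓`) lies in the kernel of the positive semidefinite matrix `Ã - α₁↑ • 1`
(resp. `δ₁↓ • 1 - D`), so it is an eigenvector.
-/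

open scoped MatrixOrder

namespace Matrix

section

variable {n : Type*} [Fintype n] [DecidableEq n] {M : Matrix n n ℝ} {c : ℝ}

lemma IsHermitian.posSemidef_sub_smul_one (hM : M.IsHermitian) (h : ∀ i, c ≤ hM.eigenvalues i) :
    (M - c • 1).PosSemidef := by
  rw [← le_iff, ← Algebra.algebraMap_eq_smul_one, algebraMap_le_iff_le_spectrum hM.isSelfAdjoint,
    hM.spectrum_real_eq_range_eigenvalues]
  rintro _ ⟨i, rfl⟩
  exact h i

lemma IsHermitian.posSemidef_smul_one_sub (hM : M.IsHermitian) (h : ∀ i, hM.eigenvalues i ≤ c) :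
    (c • 1 - M).PosSemidef := by
  rw [← le_iff, ← Algebra.algebraMap_eq_smul_one, le_algebraMap_iff_spectrum_le hM.isSelfAdjoint,
    hM.spectrum_real_eq_range_eigenvalues]
  rintro _ ⟨i, rfl⟩
  exact h i

variable {v : n → ℝ}

lemma dotProduct_sub_smul_one_mulVec (hv : v ⬝ᵥ v = 1) :
    v ⬝ᵥ ((M - c • 1) *ᵥ v) = v ⬝ᵥ (M *ᵥ v) - c := by
  rw [sub_mulVec, dotProduct_sub, smul_mulVec, one_mulVec, dotProduct_smul, hv, smul_eq_mul,
    mul_one]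

lemma dotProduct_smul_one_sub_mulVec (hv : v ⬝ᵥ v = 1) :
    v ⬝ᵥ ((c • 1 - M) *ᵥ v) = c - v ⬝ᵥ (M *ᵥ v) := by
  rw [← neg_sub, neg_mulVec, dotProduct_neg, dotProduct_sub_smul_one_mulVec hv, neg_sub]

end

section SortedEigenvalues

variable {d : ℕ} {M : Matrix (Fin d) (Fin d) ℝ}

lemma IsHermitian.eigUp_eq_s12 (hM : M.IsHermitian) :
    eigUp M = hM.eigenvalues ∘ Tuple.sort hM.eigenvalues := by
  rw [eigUp, dif_pos hM]

lemma IsHermitian.eigUp_zero_le_eigenvalues (hM : M.IsHermitian) (h0 : 0 < d) (i : Fin d) :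
    eigUp M ⟨0, h0⟩ ≤ hM.eigenvalues i := by
  simpa [hM.eigUp_eq_s12] using Tuple.monotone_sort hM.eigenvalues
    (a := ⟨0, h0⟩) (b := (Tuple.sort hM.eigenvalues).symm i) (by simp [Fin.le_def])

lemma IsHermitian.eigenvalues_le_eigDown_zero (hM : M.IsHermitian) (h0 : 0 < d) (i : Fin d) :
    hM.eigenvalues i ≤ eigDown M ⟨0, h0⟩ := by
  simpa [eigDown, hM.eigUp_eq_s12] using Tuple.monotone_sort hM.eigenvalues
    (a := (Tuple.sort hM.eigenvalues).symm i) (b := Fin.rev ⟨0, h0⟩)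
    (by simp [Fin.le_def, Fin.rev]; omega)

lemma PosDef.eigUp_pos (hM : M.PosDef) (j : Fin d) : 0 < eigUp M j := by
  rw [hM.isHermitian.eigUp_eq_s12]
  exact hM.eigenvalues_pos _

variable {v : Fin d → ℝ}

lemma IsHermitian.eigUp_zero_le_dotProduct_mulVec (hM : M.IsHermitian) (h0 : 0 < d)
    (hv : v ⬝ᵥ v = 1) : eigUp M ⟨0, h0⟩ ≤ v ⬝ᵥ (M *ᵥ v) := by
  have hP := hM.posSemidef_sub_smul_one (hM.eigUp_zero_le_eigenvalues h0)
  have := hP.dotProduct_mulVec_nonneg v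
  rw [star_trivial, dotProduct_sub_smul_one_mulVec hv] at this
  linarith

lemma IsHermitian.mulVec_eq_eigUp_zero_smul (hM : M.IsHermitian) (h0 : 0 < d)
    (hv : v ⬝ᵥ v = 1) (h : v ⬝ᵥ (M *ᵥ v) = eigUp M ⟨0, h0⟩) :
    M *ᵥ v = eigUp M ⟨0, h0⟩ • v := by
  have hP := hM.posSemidef_sub_smul_one (hM.eigUp_zero_le_eigenvalues h0)
  have := (hP.dotProduct_mulVec_zero_iff v).1 (by
    rw [star_trivial, dotProduct_sub_smul_one_mulVec hv, h, sub_self])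
  rwa [sub_mulVec, smul_mulVec, one_mulVec, sub_eq_zero] at this

lemma IsHermitian.dotProduct_mulVec_le_eigDown_zero (hM : M.IsHermitian) (h0 : 0 < d)
    (hv : v ⬝ᵥ v = 1) : v ⬝ᵥ (M *ᵥ v) ≤ eigDown M ⟨0, h0⟩ := by
  have hP := hM.posSemidef_smul_one_sub (hM.eigenvalues_le_eigDown_zero h0)
  have := hP.dotProduct_mulVec_nonneg v
  rw [star_trivial, dotProduct_smul_one_sub_mulVec hv] at this
  linarith

lemma IsHermitian.mulVec_eq_eigDown_zero_smul (hM : M.IsHermitian) (h0 : 0 < d)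
    (hv : v ⬝ᵥ v = 1) (h : v ⬝ᵥ (M *ᵥ v) = eigDown M ⟨0, h0⟩) :
    M *ᵥ v = eigDown M ⟨0, h0⟩ • v := by
  have hP := hM.posSemidef_smul_one_sub (hM.eigenvalues_le_eigDown_zero h0)
  have := (hP.dotProduct_mulVec_zero_iff v).1 (by
    rw [star_trivial, dotProduct_smul_one_sub_mulVec hv, h, sub_self])
  rwa [sub_mulVec, smul_mulVec, one_mulVec, sub_eq_zero, eq_comm] at this

end SortedEigenvalues

lemma dotProduct_mulVec_mul_add_mul_transpose {n R : Type*} [Fintype n] [CommSemiring R]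
    {A σ : Matrix n n R} {v : n → R} {s : R} (hσ : σ.IsSymm) (hev : σ *ᵥ v = s • v) :
    v ⬝ᵥ ((A * σ + σ * Aᵀ) *ᵥ v) = s * (v ⬝ᵥ ((A + Aᵀ) *ᵥ v)) := by
  have hvσ : v ᵥ* σ = s • v := by rw [← mulVec_transpose, hσ.eq, hev]
  rw [add_mulVec, ← mulVec_mulVec, ← mulVec_mulVec, dotProduct_add, dotProduct_mulVec v σ, hvσ, hev,
    mulVec_smul, dotProduct_smul, smul_dotProduct, add_mulVec, dotProduct_add, smul_eq_mul,
    smul_eq_mul, mul_add]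

end Matrix

/-- **Necessary condition for saturating the squeezing bound.**
If `Ã := −(A + Aᵀ)` is positive definite, `D ≥ 0` with `δ₁↓ > 0`, and a symmetric positive
definite `σ` satisfying `Aσ + σAᵀ + D ≥ 0` has largest eigenvalue exactly `δ₁↓/α₁↑`, then any
unit eigenvector `v` of `σ` for this eigenvalue is simultaneously an eigenvector of `Ã` with
eigenvalue `α₁↑` and of `D` with eigenvalue `δ₁↓`. -/
theorem squeezing_saturation_necessary_condition (n : ℕ) (hn : 1 ≤ n)
    (A D σ : Matrix (Fin (2*n)) (Fin (2*n)) ℝ)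
    (hA : (-(A + Aᵀ)).PosDef) (hD : D.PosSemidef)
    (hδpos : 0 < eigDown D ⟨0, by omega⟩)
    (hσsym : σ.IsSymm)
    (hLyap : (A * σ + σ * Aᵀ + D).PosSemidef)
    (hmax : eigDown σ ⟨0, by omega⟩ =
      eigDown D ⟨0, by omega⟩ / eigUp (-(A + Aᵀ)) ⟨0, by omega⟩)
    (v : Fin (2*n) → ℝ) (hv : v ⬝ᵥ v = 1)
    (hev : σ *ᵥ v = eigDown σ ⟨0, by omega⟩ • v) :
    (-(A + Aᵀ)) *ᵥ v = eigUp (-(A + Aᵀ)) ⟨0, by omega⟩ • v ∧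
      D *ᵥ v = eigDown D ⟨0, by omega⟩ • v := by
  have h2n : 0 < 2 * n := by omega
  set α := eigUp (-(A + Aᵀ)) ⟨0, h2n⟩
  set δ := eigDown D ⟨0, h2n⟩
  set s := eigDown σ ⟨0, h2n⟩
  have hα : 0 < α := hA.eigUp_pos _
  have hs : 0 < s := hmax ▸ div_pos hδpos hα
  have hδ : δ = s * α := by rw [hmax, div_mul_cancel₀ _ hα.ne']
  have hÃlow : α ≤ v ⬝ᵥ (-(A + Aᵀ) *ᵥ v) := hA.isHermitian.eigUp_zero_le_dotProduct_mulVec h2n hv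
  have hDup : v ⬝ᵥ (D *ᵥ v) ≤ δ := hD.isHermitian.dotProduct_mulVec_le_eigDown_zero h2n hv
  have hLyapv : s * v ⬝ᵥ (-(A + Aᵀ) *ᵥ v) ≤ v ⬝ᵥ (D *ᵥ v) := by
    have := hLyap.dotProduct_mulVec_nonneg v
    rw [star_trivial, add_mulVec, dotProduct_add, dotProduct_mulVec_mul_add_mul_transpose hσsym hev]
      at this
    rw [neg_mulVec, dotProduct_neg]
    linarith
  have hÃeq : v ⬝ᵥ (-(A + Aᵀ) *ᵥ v) = α :=
    le_antisymm (le_of_mul_le_mul_left (by linarith) hs) hÃlow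
  have hDeq : v ⬝ᵥ (D *ᵥ v) = δ := le_antisymm hDup (by rw [hδ, ← hÃeq]; exact hLyapv)
  exact ⟨hA.isHermitian.mulVec_eq_eigUp_zero_smul h2n hv hÃeq,
    hD.isHermitian.mulVec_eq_eigDown_zero_smul h2n hv hDeq⟩
end

section
/- (Free system, squeezing bound is tight.) Fix N ≥ 0 and consider one mode (n = 1) with A = −(1/2)𝟙₂ and D = (1+2N)𝟙₂. The matrix σ = diag(1/(1+2N), 1+2N) satisfies σ + iΩ ≥ 0, satisfies the Lyapunov inequality Aσ + σAᵀ + D ≥ 0, and has smallest eigenvalue exactly 1/(1+2N). Hence the squeezing bound λ₁↑ ≥ 1/(1+2N) is attained. -/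
open Matrix
open scoped ComplexOrder

/-! For `σ = diag(p, q)` with `pq ≥ 1`, `σ + iΩ` is `p • vᴴv` with `v = (1, i/p)` plus the
nonnegative diagonal `diag(0, q − 1/p)`. With `A = −𝟙/2` the Lyapunov matrix `Aσ + σAᵀ + D` is just
`D − σ`, which for `D = (1+2N)𝟙` and `σ = diag(1/(1+2N), 1+2N)` is `diag((1+2N) − 1/(1+2N), 0) ≥ 0`.
Finally the smallest eigenvalue of a Hermitian matrix is the least element of its spectrum, and the
spectrum of a diagonal matrix is the set of its entries. -/

theorem Omega_one : Omega 1 = !![0, 1; -1, 0] := by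
  ext i j
  fin_cases i <;> fin_cases j <;> simp [Omega]

theorem isCM_one_diagonal {p q : ℝ} (hp : 0 < p) (hpq : 1 ≤ p * q) :
    IsCM 1 (diagonal ![p, q]) := by
  refine ⟨isSymm_diagonal _, ?_⟩
  have hp' : (p : ℂ) ≠ 0 := by exact_mod_cast hp.ne'
  set v : Matrix (Fin 1) (Fin 2) ℂ := !![1, Complex.I / p]
  have hsplit :
      (diagonal ![p, q]).map (Complex.ofReal ·) + Complex.I • (Omega 1).map (Complex.ofReal ·) =
        (p : ℂ) • (vᴴ * v) + diagonal ![0, ((q - p⁻¹ : ℝ) : ℂ)] := by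
    rw [Omega_one]
    ext i j
    fin_cases i <;> fin_cases j <;> simp [v, mul_apply, conjTranspose_apply]
    all_goals field_simp
    simp
  have hq : p⁻¹ ≤ q := (inv_le_iff_one_le_mul₀' hp).mpr hpq
  rw [hsplit]
  refine ((posSemidef_conjTranspose_mul_self v).smul (by exact_mod_cast hp.le)).add ?_
  refine posSemidef_diagonal_iff.mpr fun i => ?_
  fin_cases i <;> simp
  exact_mod_cast hq

theorem lyapunov_neg_half_smul_one {n : Type*} [Fintype n] [DecidableEq n]
    (σ D : Matrix n n ℝ) :
    ((-(1/2) : ℝ) • 1) * σ + σ * ((-(1/2) : ℝ) • 1 : Matrix n n ℝ)ᵀ + D = D - σ := by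
  simp only [transpose_smul, transpose_one, Matrix.smul_mul, Matrix.mul_smul, one_mul, mul_one]
  module

theorem posSemidef_smul_one_sub_diagonal {n : Type*} [Fintype n] [DecidableEq n] {c : ℝ}
    {v : n → ℝ} (hv : ∀ i, v i ≤ c) : (c • 1 - diagonal v).PosSemidef := by
  rw [smul_one_eq_diagonal, diagonal_sub]
  exact posSemidef_diagonal_iff.mpr fun i => sub_nonneg.mpr (hv i)

theorem Matrix.IsHermitian.isLeast_spectrum_eigUp {d : ℕ} {M : Matrix (Fin d) (Fin d) ℝ}
    (hM : M.IsHermitian) (hd : 0 < d) : IsLeast (spectrum ℝ M) (eigUp M ⟨0, hd⟩) := by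
  rw [hM.spectrum_real_eq_range_eigenvalues,
    ← (Tuple.sort hM.eigenvalues).surjective.range_comp, eigUp, dif_pos hM]
  refine ⟨⟨_, rfl⟩, ?_⟩
  rintro _ ⟨i, rfl⟩
  exact Tuple.monotone_sort _ (Nat.zero_le i.val)

theorem eigUp_diagonal_zero {d : ℕ} {v : Fin d → ℝ} {p : ℝ} (hd : 0 < d)
    (hp : IsLeast (Set.range v) p) : eigUp (diagonal v) ⟨0, hd⟩ = p := by
  refine ((isHermitian_diagonal v).isLeast_spectrum_eigUp hd).unique ?_
  rwa [spectrum_diagonal]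

/-- **Free system, squeezing bound is tight.** For one mode with `A = −(1/2)𝟙₂` and
`D = (1+2N)𝟙₂`, the matrix `σ = diag(1/(1+2N), 1+2N)` is a covariance matrix satisfying
the Lyapunov inequality, with smallest eigenvalue exactly `1/(1+2N)`. -/
theorem free_system_squeezing_bound_tight (N : ℝ) (hN : 0 ≤ N)
    (A D σ : Matrix (Fin (2*1)) (Fin (2*1)) ℝ)
    (hA : A = (-(1/2) : ℝ) • 1) (hD : D = (1 + 2*N) • 1)
    (hσ : σ = !![1/(1+2*N), 0; 0, 1+2*N]) :
    IsCM 1 σ ∧ (A * σ + σ * Aᵀ + D).PosSemidef ∧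
      eigUp σ ⟨0, by omega⟩ = 1/(1+2*N) := by
  have ha : 0 < 1 + 2*N := by linarith
  have hle : 1/(1+2*N) ≤ 1 + 2*N := by
    rw [div_le_iff₀ ha]
    nlinarith
  rw [← diagonal_vec2] at hσ
  subst hA hD hσ
  refine ⟨isCM_one_diagonal (by positivity) (one_div_mul_cancel ha.ne').ge, ?_, ?_⟩
  · rw [lyapunov_neg_half_smul_one]
    exact posSemidef_smul_one_sub_diagonal (Fin.forall_fin_two.mpr ⟨hle, le_rfl⟩)
  · refine eigUp_diagonal_zero _ ⟨⟨0, rfl⟩, ?_⟩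
    rintro _ ⟨i, rfl⟩
    fin_cases i
    exacts [le_rfl, hle]
end

section
/- (Free system, maximal entanglement.) Fix N ≥ 0 and consider two modes (n = 2) with A = −(1/2)𝟙₄ and D = (1+2N)𝟙₄. Then every real symmetric 4×4 matrix σ satisfying σ + iΩ ≥ 0 and Aσ + σAᵀ + D ≥ 0 has, for the 1 vs 1 mode bipartition, smallest partially transposed symplectic eigenvalue ν̃₋ ≥ 1/(1+2N); equivalently, its logarithmic negativity satisfies E_N(σ) ≤ log₂(1+2N). -/
/-! The Lyapunov condition with `A = -½𝟙` and `D = (1+2N)𝟙` reads `σ ≤ (1+2N)𝟙`. Testing the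
uncertainty relation `σ + iΩ ≥ 0` on `x - i(1+2N)⁻¹Ωx` and using this upper bound on `Ωx` gives
`σ ≥ (1+2N)⁻¹𝟙`. As `Ω̃` is orthogonal, `⟨x, σ^{1/2}Ω̃ᵀσΩ̃σ^{1/2}x⟩ ≥ (1+2N)⁻¹‖Ω̃σ^{1/2}x‖² =
(1+2N)⁻¹⟨x, σx⟩ ≥ (1+2N)⁻²‖x‖²`, so every eigenvalue, in particular `ν̃₋²`, is at least
`(1+2N)⁻²`. -/

open Matrix
open scoped ComplexOrder

section RealQuadraticForms

variable {ι : Type*} [Fintype ι]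

theorem dotProduct_mulVec_self_eq_zero_of_transpose_eq_neg {J : Matrix ι ι ℝ} (hJ : Jᵀ = -J)
    (x : ι → ℝ) : x ⬝ᵥ (J *ᵥ x) = 0 := by
  have h := dotProduct_transpose_mulVec J x x
  rw [hJ, neg_mulVec, dotProduct_neg] at h
  linarith

theorem mulVec_dotProduct_mulVec_of_transpose_mul_self [DecidableEq ι] {P : Matrix ι ι ℝ}
    (hP : Pᵀ * P = 1) (x : ι → ℝ) : (P *ᵥ x) ⬝ᵥ (P *ᵥ x) = x ⬝ᵥ x := by
  rw [dotProduct_mulVec, vecMul_mulVec, hP, vecMul_one]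

theorem dotProduct_mulVec_le_of_posSemidef_smul_one_sub [DecidableEq ι] {σ : Matrix ι ι ℝ}
    {c : ℝ} (h : (c • 1 - σ).PosSemidef) (x : ι → ℝ) : x ⬝ᵥ (σ *ᵥ x) ≤ c * (x ⬝ᵥ x) := by
  have hx := h.dotProduct_mulVec_nonneg x
  rw [star_trivial, sub_mulVec, smul_mulVec, one_mulVec, dotProduct_sub, dotProduct_smul,
    smul_eq_mul] at hx
  linarith

theorem ofReal_dotProduct_map_mulVec (M : Matrix ι ι ℝ) (x y : ι → ℝ) :
    (Complex.ofReal ∘ x) ⬝ᵥ (M.map (Complex.ofReal ·) *ᵥ (Complex.ofReal ∘ y))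
      = ((x ⬝ᵥ (M *ᵥ y) : ℝ) : ℂ) := by
  simp [dotProduct, mulVec]

theorem two_mul_dotProduct_mulVec_le_of_posSemidef {σ J : Matrix ι ι ℝ} (hσ : σᵀ = σ)
    (hJ : Jᵀ = -J)
    (h : (σ.map (Complex.ofReal ·) + Complex.I • J.map (Complex.ofReal ·)).PosSemidef)
    (x y : ι → ℝ) : 2 * (x ⬝ᵥ (J *ᵥ y)) ≤ x ⬝ᵥ (σ *ᵥ x) + y ⬝ᵥ (σ *ᵥ y) := by
  set v : ι → ℂ := Complex.ofReal ∘ x + Complex.I • (Complex.ofReal ∘ y)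
  have hv : star v = Complex.ofReal ∘ x - Complex.I • (Complex.ofReal ∘ y) := by
    ext j; simp [v, Complex.ext_iff]
  have hσyx : y ⬝ᵥ (σ *ᵥ x) = x ⬝ᵥ (σ *ᵥ y) := by
    simpa [hσ] using dotProduct_transpose_mulVec σ y x
  have hJyx : y ⬝ᵥ (J *ᵥ x) = -(x ⬝ᵥ (J *ᵥ y)) := by
    have hyx := dotProduct_transpose_mulVec J y x
    rw [hJ, neg_mulVec, dotProduct_neg] at hyx
    linarith
  have hexp : star v ⬝ᵥ
      ((σ.map (Complex.ofReal ·) + Complex.I • J.map (Complex.ofReal ·)) *ᵥ v)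
        = ((x ⬝ᵥ (σ *ᵥ x) + y ⬝ᵥ (σ *ᵥ y) - 2 * (x ⬝ᵥ (J *ᵥ y)) : ℝ) : ℂ) := by
    simp only [hv, v, add_mulVec, smul_mulVec, mulVec_add, mulVec_smul, sub_dotProduct,
      dotProduct_add, dotProduct_smul, smul_dotProduct, smul_eq_mul,
      ofReal_dotProduct_map_mulVec, dotProduct_mulVec_self_eq_zero_of_transpose_eq_neg hJ,
      hσyx, hJyx]
    push_cast
    linear_combination (2 * ((x ⬝ᵥ (J *ᵥ y) : ℝ) : ℂ) - ((y ⬝ᵥ (σ *ᵥ y) : ℝ) : ℂ)) * Complex.I_sq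
  have hnn := h.dotProduct_mulVec_nonneg v
  rw [hexp, Complex.zero_le_real] at hnn
  linarith

theorem inv_mul_le_dotProduct_mulVec_of_posSemidef [DecidableEq ι] {σ J : Matrix ι ι ℝ}
    (hσ : σᵀ = σ) (hJ : Jᵀ = -J) (hJJ : Jᵀ * J = 1)
    (h : (σ.map (Complex.ofReal ·) + Complex.I • J.map (Complex.ofReal ·)).PosSemidef)
    {c : ℝ} (hc : 0 < c) (hle : ∀ x, x ⬝ᵥ (σ *ᵥ x) ≤ c * (x ⬝ᵥ x)) (x : ι → ℝ) :
    c⁻¹ * (x ⬝ᵥ x) ≤ x ⬝ᵥ (σ *ᵥ x) := by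
  have hJx := mulVec_dotProduct_mulVec_of_transpose_mul_self hJJ x
  have hxJJx : x ⬝ᵥ (J *ᵥ (J *ᵥ x)) = -(x ⬝ᵥ x) := by
    have hxx := dotProduct_transpose_mulVec J x (J *ᵥ x)
    rw [hJ, neg_mulVec, dotProduct_neg, hJx] at hxx
    linarith
  have hRS := two_mul_dotProduct_mulVec_le_of_posSemidef hσ hJ h x (-c⁻¹ • (J *ᵥ x))
  simp only [mulVec_smul, dotProduct_smul, smul_dotProduct, smul_eq_mul, hxJJx] at hRS
  have hσJx := hle (J *ᵥ x)
  rw [hJx] at hσJx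
  have hσJx_scaled : c⁻¹ * c⁻¹ * ((J *ᵥ x) ⬝ᵥ (σ *ᵥ J *ᵥ x)) ≤ c⁻¹ * (x ⬝ᵥ x) :=
    calc _ ≤ c⁻¹ * c⁻¹ * (c * (x ⬝ᵥ x)) := by gcongr
      _ = c⁻¹ * (x ⬝ᵥ x) := by field_simp
  linarith

theorem sq_mul_le_dotProduct_mulVec_conj [DecidableEq ι] {σ s P : Matrix ι ι ℝ} (hs : sᵀ = s)
    (hss : s * s = σ) (hP : Pᵀ * P = 1) {m : ℝ} (hm : 0 ≤ m)
    (hσ : ∀ x, m * (x ⬝ᵥ x) ≤ x ⬝ᵥ (σ *ᵥ x))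
    (x : ι → ℝ) : m ^ 2 * (x ⬝ᵥ x) ≤ x ⬝ᵥ ((s * Pᵀ * σ * P * s) *ᵥ x) := by
  have hconj : x ⬝ᵥ ((s * Pᵀ * σ * P * s) *ᵥ x) = (P *ᵥ s *ᵥ x) ⬝ᵥ (σ *ᵥ P *ᵥ s *ᵥ x) := by
    have hB : s * Pᵀ * σ * P * s = (P * s)ᵀ * σ * (P * s) := by
      rw [transpose_mul, hs]; simp only [Matrix.mul_assoc]
    rw [hB, ← mulVec_mulVec, ← mulVec_mulVec, dotProduct_transpose_mulVec, dotProduct_comm]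
    simp only [mulVec_mulVec]
  have hsx : (s *ᵥ x) ⬝ᵥ (s *ᵥ x) = x ⬝ᵥ (σ *ᵥ x) := by
    rw [dotProduct_mulVec, vecMul_mulVec, hs, hss, dotProduct_mulVec]
  calc m ^ 2 * (x ⬝ᵥ x) ≤ m * (x ⬝ᵥ (σ *ᵥ x)) := by
        rw [sq, mul_assoc]; exact mul_le_mul_of_nonneg_left (hσ x) hm
    _ = m * ((P *ᵥ s *ᵥ x) ⬝ᵥ (P *ᵥ s *ᵥ x)) := by
        rw [mulVec_dotProduct_mulVec_of_transpose_mul_self hP, hsx]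
    _ ≤ _ := hconj ▸ hσ _

theorem le_sInf_spectrum_of_forall_mul_le [DecidableEq ι] [Nonempty ι] {M : Matrix ι ι ℝ}
    (hM : M.IsHermitian) {m : ℝ} (h : ∀ x, m * (x ⬝ᵥ x) ≤ x ⬝ᵥ (M *ᵥ x)) :
    m ≤ sInf (spectrum ℝ M) := by
  rw [hM.spectrum_real_eq_range_eigenvalues]
  refine le_csInf (Set.range_nonempty _) ?_
  rintro _ ⟨i, rfl⟩
  have hv := h (hM.eigenvectorBasis i)
  have hnorm : (⇑(hM.eigenvectorBasis i)) ⬝ᵥ (⇑(hM.eigenvectorBasis i)) = 1 := by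
    have h1 : inner ℝ (hM.eigenvectorBasis i) (hM.eigenvectorBasis i) = 1 := by
      rw [real_inner_self_eq_norm_sq, hM.eigenvectorBasis.orthonormal.1 i, one_pow]
    rwa [EuclideanSpace.inner_eq_star_dotProduct, star_trivial] at h1
  rwa [hM.mulVec_eigenvectorBasis, dotProduct_smul, smul_eq_mul, hnorm, mul_one, mul_one] at hv

end RealQuadraticForms

theorem posSemidef_msqrt {d : ℕ} {σ : Matrix (Fin d) (Fin d) ℝ} (hσ : σ.PosSemidef) :
    (msqrt σ).PosSemidef := by
  rw [msqrt, dif_pos hσ]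
  refine PosSemidef.mul_mul_conjTranspose_same ?_ _
  rw [posSemidef_diagonal_iff]
  intro i
  simp [Real.sqrt_nonneg]

theorem msqrt_mul_self {d : ℕ} {σ : Matrix (Fin d) (Fin d) ℝ} (hσ : σ.PosSemidef) :
    msqrt σ * msqrt σ = σ := by
  set U : Matrix (Fin d) (Fin d) ℝ := hσ.1.eigenvectorUnitary.1
  have hUU : star U * U = 1 := Unitary.coe_star_mul_self _
  have hspec : σ = U * diagonal (RCLike.ofReal ∘ hσ.1.eigenvalues) * star U := by
    conv_lhs => rw [hσ.1.spectral_theorem, Unitary.conjStarAlgAut_apply]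
  rw [msqrt, dif_pos hσ]
  conv_rhs => rw [hspec]
  calc _ = U * (diagonal ((↑) ∘ (√·) ∘ hσ.1.eigenvalues) * (star U * U) *
        diagonal ((↑) ∘ (√·) ∘ hσ.1.eigenvalues)) * star U := by simp only [U, Matrix.mul_assoc]
    _ = _ := by
      rw [hUU, Matrix.mul_one, diagonal_mul_diagonal]
      congr 3
      funext i
      simp [Real.mul_self_sqrt (hσ.eigenvalues_nonneg i)]

theorem le_nuMin_of_forall_mul_le {n l : ℕ} (hn : n ≠ 0)
    (hP : (OmegaPT n l)ᵀ * OmegaPT n l = 1) {σ : Matrix (Fin (2*n)) (Fin (2*n)) ℝ}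
    (hσ : σᵀ = σ) {m : ℝ} (hm : 0 ≤ m) (h : ∀ x, m * (x ⬝ᵥ x) ≤ x ⬝ᵥ (σ *ᵥ x)) :
    m ≤ nuMin n l σ := by
  have : Nonempty (Fin (2*n)) := ⟨⟨0, by omega⟩⟩
  have hσherm : σ.IsHermitian := by rwa [IsHermitian, conjTranspose_eq_transpose_of_trivial]
  have hσpsd : σ.PosSemidef := PosSemidef.of_dotProduct_mulVec_nonneg hσherm fun x =>
    (mul_nonneg hm (dotProduct_self_star_nonneg x)).trans (h x)
  have hs : (msqrt σ)ᵀ = msqrt σ := by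
    simpa [IsHermitian] using (posSemidef_msqrt hσpsd).1
  have hMherm : (msqrt σ * (OmegaPT n l)ᵀ * σ * OmegaPT n l * msqrt σ).IsHermitian := by
    simp only [IsHermitian, conjTranspose_eq_transpose_of_trivial, transpose_mul, hs, hσ,
      transpose_transpose, Matrix.mul_assoc]
  rw [nuMin]
  exact Real.le_sqrt_of_sq_le <| le_sInf_spectrum_of_forall_mul_le hMherm
    (sq_mul_le_dotProduct_mulVec_conj hs (msqrt_mul_self hσpsd) hP hm h)

theorem logNeg_le_logb_of_inv_le_nuMin {n l : ℕ} {σ : Matrix (Fin (2*n)) (Fin (2*n)) ℝ} {c : ℝ}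
    (hc : 1 ≤ c) (h : c⁻¹ ≤ nuMin n l σ) : logNeg n l σ ≤ Real.logb 2 c := by
  refine max_le (Real.logb_nonneg one_lt_two hc) ?_
  rw [neg_le, ← Real.logb_inv]
  exact Real.logb_le_logb_of_le one_lt_two (by positivity) h

theorem omega_two_transpose : (Omega 2)ᵀ = -Omega 2 := by
  ext i j
  fin_cases i <;> fin_cases j <;> simp [Omega]

theorem omega_two_transpose_mul_self : (Omega 2)ᵀ * Omega 2 = 1 := by
  ext i j
  fin_cases i <;> fin_cases j <;> simp [Omega, mul_apply, one_apply, Fin.sum_univ_four]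

theorem omegaPT_two_one_transpose_mul_self : (OmegaPT 2 1)ᵀ * OmegaPT 2 1 = 1 := by
  ext i j
  fin_cases i <;> fin_cases j <;>
    simp [OmegaPT, Tmat, Omega, mul_apply, one_apply, Fin.sum_univ_four]

/-- **Free system, maximal entanglement.** For two modes with `A = −(1/2)𝟙₄` and
`D = (1+2N)𝟙₄`, every covariance matrix `σ` satisfying `Aσ + σAᵀ + D ≥ 0` has, for the
1 vs 1 bipartition, `ν̃₋ ≥ 1/(1+2N)`, equivalently `E_N(σ) ≤ log₂(1+2N)`. -/
theorem free_system_maximal_entanglement (N : ℝ) (hN : 0 ≤ N)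
    (A D σ : Matrix (Fin (2*2)) (Fin (2*2)) ℝ)
    (hA : A = (-(1/2) : ℝ) • 1) (hD : D = (1 + 2*N) • 1)
    (hCM : IsCM 2 σ) (hLyap : (A * σ + σ * Aᵀ + D).PosSemidef) :
    1 / (1 + 2*N) ≤ nuMin 2 1 σ ∧ logNeg 2 1 σ ≤ Real.logb 2 (1 + 2*N) := by
  obtain ⟨hσ, hRS⟩ := hCM
  have hc : 1 ≤ 1 + 2 * N := by linarith
  have hc0 : 0 < 1 + 2 * N := by linarith
  have hdrift : A * σ + σ * Aᵀ + D = (1 + 2 * N) • 1 - σ := by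
    subst hA hD
    simp only [transpose_smul, transpose_one, smul_mul, Matrix.mul_smul, Matrix.one_mul,
      Matrix.mul_one]
    module
  have hupper := dotProduct_mulVec_le_of_posSemidef_smul_one_sub (hdrift ▸ hLyap)
  have hlower := inv_mul_le_dotProduct_mulVec_of_posSemidef hσ.eq omega_two_transpose
    omega_two_transpose_mul_self hRS hc0 hupper
  have hnu := le_nuMin_of_forall_mul_le two_ne_zero omegaPT_two_one_transpose_mul_self hσ.eq
    (inv_nonneg.mpr hc0.le) hlower
  exact ⟨(one_div (1 + 2 * N)).symm ▸ hnu, logNeg_le_logb_of_inv_le_nuMin hc hnu⟩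
end
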